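/- If K := sup over measurable A with 0 < π(A) < 1 of k(A) equals 2, then k_2 := inf over such A of k_2(A) equals 0. (Reversibility is not required.) -/

import Mathlib

/-!
For an invariant `π`, a two-step path from `A` to `Aᶜ` either stays in `A` for its first step or
is in `Aᶜ` after it and stays there; together with the balance of the flows out of and into `A`
this gives `F₂(A) + 2 F(A) ≤ 1`, where `F`, `F₂` are the one- and two-step flows out of `A`.
Since also `F(A) ≤ min (π A) (π Aᶜ)`, this yields `k₂(A) (k(A) - 1) ≤ k(A) (2 - k(A))`, so the sets
with `k(A)` close to `2` have `k₂(A)` close to `0`.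
-/

open MeasureTheory ProbabilityTheory

/-- The `n`-step transition kernel (`n`-fold composition of `κ`). -/
noncomputable def kpow {Ω : Type*} [MeasurableSpace Ω] (κ : Kernel Ω Ω) : ℕ → Kernel Ω Ω
  | 0 => Kernel.id
  | n + 1 => (kpow κ n) ∘ₖ κ

/-- The probability flow out of the set `A`: `∫_A p(x, Aᶜ) π(dx)`. -/
noncomputable def flow {Ω : Type*} [MeasurableSpace Ω] (κ : Kernel Ω Ω) (π : Measure Ω)
    (A : Set Ω) : ℝ :=
  (∫⁻ x in A, κ x Aᶜ ∂π).toReal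

/-- The isoperimetric quantity `k(A) = (1/(π(A)π(Aᶜ))) ∫_A p(x, Aᶜ) π(dx)`. -/
noncomputable def isoQ {Ω : Type*} [MeasurableSpace Ω] (κ : Kernel Ω Ω) (π : Measure Ω)
    (A : Set Ω) : ℝ :=
  flow κ π A / ((π A).toReal * (π Aᶜ).toReal)

/-- Reversibility: `π(dx)p(x,dy) = π(dy)p(y,dx)`. -/
def Reversible {Ω : Type*} [MeasurableSpace Ω] (κ : Kernel Ω Ω) (π : Measure Ω) : Prop :=
  ∀ A B : Set Ω, MeasurableSet A → MeasurableSet B →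
    ∫⁻ x in A, κ x B ∂π = ∫⁻ x in B, κ x A ∂π

/-- `k_n := inf over A with 0 < π(A) < 1 of k_n(A)`, the `n`-step isoperimetric constant. -/
noncomputable def kinfN {Ω : Type*} [MeasurableSpace Ω] (κ : Kernel Ω Ω) (π : Measure Ω)
    (n : ℕ) : ℝ :=
  sInf ((fun A => isoQ (kpow κ n) π A) ''
    {A : Set Ω | MeasurableSet A ∧ 0 < π A ∧ π A < 1})

/-- `K := sup over A with 0 < π(A) < 1 of k(A)`. -/
noncomputable def Ksup {Ω : Type*} [MeasurableSpace Ω] (κ : Kernel Ω Ω) (π : Measure Ω) : ℝ :=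
  sSup ((fun A => isoQ κ π A) ''
    {A : Set Ω | MeasurableSet A ∧ 0 < π A ∧ π A < 1})

open scoped ENNReal

namespace ProbabilityTheory.Kernel

variable {Ω : Type*} [MeasurableSpace Ω] {κ : Kernel Ω Ω} {π : Measure Ω} {A : Set Ω}

lemma invariant_of_forall_measure_eq_lintegral
    (hinv : ∀ B : Set Ω, MeasurableSet B → π B = ∫⁻ x, κ x B ∂π) : κ.Invariant π :=
  Measure.ext fun B hB => by
    rw [Measure.bind_apply hB κ.aemeasurable]
    exact (hinv B hB).symm

lemma Invariant.lintegral_apply (h : κ.Invariant π) {B : Set Ω} (hB : MeasurableSet B) :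
    ∫⁻ x, κ x B ∂π = π B := by
  rw [← Measure.bind_apply hB κ.aemeasurable, h.def]

lemma setLIntegral_apply_add_setLIntegral_apply_compl [IsMarkovKernel κ] (hA : MeasurableSet A)
    (B : Set Ω) : ∫⁻ x in B, κ x A ∂π + ∫⁻ x in B, κ x Aᶜ ∂π = π B := by
  rw [← lintegral_add_left (κ.measurable_coe hA)]
  simp [measure_add_measure_compl hA]

lemma setLIntegral_apply_le_measure [IsMarkovKernel κ] (A B : Set Ω) :
    ∫⁻ x in B, κ x A ∂π ≤ π B :=
  (setLIntegral_mono measurable_const fun _ _ => prob_le_one).trans_eq (by simp)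

lemma Invariant.setLIntegral_apply_compl_eq [IsMarkovKernel κ] [IsFiniteMeasure π]
    (h : κ.Invariant π) (hA : MeasurableSet A) :
    ∫⁻ x in A, κ x Aᶜ ∂π = ∫⁻ x in Aᶜ, κ x A ∂π := by
  have hout := setLIntegral_apply_add_setLIntegral_apply_compl (κ := κ) (π := π) hA A
  have hin : ∫⁻ x in A, κ x A ∂π + ∫⁻ x in Aᶜ, κ x A ∂π = π A := by
    rw [lintegral_add_compl _ hA, h.lintegral_apply hA]
  have hfin : ∫⁻ x in A, κ x A ∂π ≠ ∞ :=
    ne_top_of_le_ne_top (measure_ne_top π A) (setLIntegral_apply_le_measure A A)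
  exact (ENNReal.add_right_inj hfin).mp (hout.trans hin.symm)

/-- A two-step path from `A` to `Aᶜ` either stays in `A` for one step or is in `Aᶜ` after one
step and stays there. -/
lemma Invariant.setLIntegral_comp_apply_compl_le [IsMarkovKernel κ] (h : κ.Invariant π)
    (hA : MeasurableSet A) :
    ∫⁻ x in A, (κ ∘ₖ κ) x Aᶜ ∂π ≤ ∫⁻ x in A, κ x A ∂π + ∫⁻ x in Aᶜ, κ x Aᶜ ∂π := by
  have hstay : Measurable (Aᶜ.indicator fun y => κ y Aᶜ) :=
    (κ.measurable_coe hA.compl).indicator hA.compl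
  have hpt : ∀ x, (κ ∘ₖ κ) x Aᶜ ≤ κ x A + ∫⁻ y, Aᶜ.indicator (fun y => κ y Aᶜ) y ∂(κ x) := by
    intro x
    rw [Kernel.comp_apply' _ _ _ hA.compl, ← lintegral_add_compl _ hA,
      lintegral_indicator hA.compl]
    gcongr
    exact setLIntegral_apply_le_measure _ _
  calc ∫⁻ x in A, (κ ∘ₖ κ) x Aᶜ ∂π
      ≤ ∫⁻ x in A, (κ x A + ∫⁻ y, Aᶜ.indicator (fun y => κ y Aᶜ) y ∂(κ x)) ∂π :=
        lintegral_mono hpt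
    _ ≤ ∫⁻ x in A, κ x A ∂π + ∫⁻ x, ∫⁻ y, Aᶜ.indicator (fun y => κ y Aᶜ) y ∂(κ x) ∂π := by
        rw [lintegral_add_left (κ.measurable_coe hA)]
        gcongr
        exact Measure.restrict_le_self
    _ = ∫⁻ x in A, κ x A ∂π + ∫⁻ x in Aᶜ, κ x Aᶜ ∂π := by
        rw [← Measure.lintegral_bind κ.aemeasurable hstay.aemeasurable, h.def,
          lintegral_indicator hA.compl]

lemma Invariant.setLIntegral_comp_apply_compl_add_two_mul_le [IsMarkovKernel κ]
    [IsFiniteMeasure π] (h : κ.Invariant π) (hA : MeasurableSet A) :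
    ∫⁻ x in A, (κ ∘ₖ κ) x Aᶜ ∂π + 2 * ∫⁻ x in A, κ x Aᶜ ∂π ≤ π Set.univ := by
  calc ∫⁻ x in A, (κ ∘ₖ κ) x Aᶜ ∂π + 2 * ∫⁻ x in A, κ x Aᶜ ∂π
      ≤ ∫⁻ x in A, κ x A ∂π + ∫⁻ x in Aᶜ, κ x Aᶜ ∂π
          + (∫⁻ x in A, κ x Aᶜ ∂π + ∫⁻ x in Aᶜ, κ x A ∂π) := by
        rw [two_mul, ← h.setLIntegral_apply_compl_eq hA]
        gcongr
        exact h.setLIntegral_comp_apply_compl_le hA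
    _ = π A + π Aᶜ := by
        rw [← setLIntegral_apply_add_setLIntegral_apply_compl (κ := κ) hA A,
          ← setLIntegral_apply_add_setLIntegral_apply_compl (κ := κ) hA Aᶜ]
        ring
    _ = π Set.univ := measure_add_measure_compl hA

end ProbabilityTheory.Kernel

section Isoperimetry

variable {Ω : Type*} [MeasurableSpace Ω] {κ : Kernel Ω Ω} {π : Measure Ω} {A : Set Ω}

lemma kpow_two (κ : Kernel Ω Ω) : kpow κ 2 = κ ∘ₖ κ := by
  simp [kpow, Kernel.id_comp]

lemma isoQ_nonneg (κ : Kernel Ω Ω) (π : Measure Ω) (A : Set Ω) : 0 ≤ isoQ κ π A := by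
  unfold isoQ flow
  positivity

lemma kinfN_nonneg (κ : Kernel Ω Ω) (π : Measure Ω) (n : ℕ) : 0 ≤ kinfN κ π n :=
  Real.sInf_nonneg <| Set.forall_mem_image.2 fun A _ => isoQ_nonneg _ _ A

lemma kinfN_le_isoQ {n : ℕ} (hA : MeasurableSet A ∧ 0 < π A ∧ π A < 1) :
    kinfN κ π n ≤ isoQ (kpow κ n) π A :=
  csInf_le ⟨0, Set.forall_mem_image.2 fun B _ => isoQ_nonneg _ _ B⟩ ⟨A, hA, rfl⟩

lemma flow_le_measure [IsMarkovKernel κ] [IsFiniteMeasure π] : flow κ π A ≤ (π A).toReal :=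
  ENNReal.toReal_mono (measure_ne_top π A) (Kernel.setLIntegral_apply_le_measure _ A)

/-- With `k = F / (a b)` and `k₂ = F₂ / (a b)`: the constraints `k a ≤ 1`, `k b ≤ 1` force
`k² a b ≥ k - 1`, i.e. `1 / (a b) ≤ k² / (k - 1)`, whence
`k₂ ≤ 1 / (a b) - 2 k ≤ k (2 - k) / (k - 1)`. -/
lemma div_mul_div_sub_one_le {a b F F₂ : ℝ} (ha : 0 < a) (hb : 0 < b) (hab : a + b = 1)
    (hF : 0 ≤ F) (hFa : F ≤ a) (hFb : F ≤ b) (hF₂ : 0 ≤ F₂) (hsum : F₂ + 2 * F ≤ 1) :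
    F₂ / (a * b) * (F / (a * b) - 1) ≤ F / (a * b) * (2 - F / (a * b)) := by
  have hab0 : 0 < a * b := mul_pos ha hb
  obtain ⟨k, rfl⟩ : ∃ k, F = k * (a * b) := ⟨F / (a * b), (div_mul_cancel₀ _ hab0.ne').symm⟩
  obtain ⟨k₂, rfl⟩ : ∃ k₂, F₂ = k₂ * (a * b) :=
    ⟨F₂ / (a * b), (div_mul_cancel₀ _ hab0.ne').symm⟩
  simp only [mul_div_cancel_right₀ _ hab0.ne']
  have hk : 0 ≤ k := nonneg_of_mul_nonneg_left hF hab0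
  have hk₂ : 0 ≤ k₂ := nonneg_of_mul_nonneg_left hF₂ hab0
  have hkb : k * b ≤ 1 := le_of_mul_le_mul_left (by linarith) ha
  have hka : k * a ≤ 1 := le_of_mul_le_mul_left (by linarith) hb
  have hk2 : k ≤ 2 := by nlinarith
  rcases le_or_gt k 1 with hk1 | hk1
  · nlinarith
  · have hprod : k - 1 ≤ k ^ 2 * (a * b) := by
      nlinarith [mul_nonneg (sub_nonneg.2 hka) (sub_nonneg.2 hkb)]
    refine le_of_mul_le_mul_right ?_ hab0
    nlinarith

namespace ProbabilityTheory.Kernel.Invariant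

lemma flow_le_measure_compl [IsFiniteMeasure π] (h : κ.Invariant π) (hA : MeasurableSet A) :
    flow κ π A ≤ (π Aᶜ).toReal :=
  ENNReal.toReal_mono (measure_ne_top π Aᶜ)
    ((setLIntegral_le_lintegral A _).trans_eq (h.lintegral_apply hA.compl))

lemma flow_comp_add_two_mul_flow_le [IsMarkovKernel κ] [IsProbabilityMeasure π]
    (h : κ.Invariant π) (hA : MeasurableSet A) : flow (κ ∘ₖ κ) π A + 2 * flow κ π A ≤ 1 := by
  have hle := h.setLIntegral_comp_apply_compl_add_two_mul_le hA
  rw [measure_univ] at hle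
  have hfin := ne_top_of_le_ne_top ENNReal.one_ne_top hle
  have hle' := ENNReal.toReal_mono ENNReal.one_ne_top hle
  rw [ENNReal.toReal_add (ENNReal.add_ne_top.1 hfin).1 (ENNReal.add_ne_top.1 hfin).2,
    ENNReal.toReal_mul] at hle'
  simpa [flow] using hle'

lemma isoQ_comp_mul_isoQ_sub_one_le [IsMarkovKernel κ] [IsProbabilityMeasure π]
    (h : κ.Invariant π) (hA : MeasurableSet A) (h0 : 0 < π A) (h1 : π A < 1) :
    isoQ (κ ∘ₖ κ) π A * (isoQ κ π A - 1) ≤ isoQ κ π A * (2 - isoQ κ π A) := by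
  have hcompl : (π Aᶜ).toReal = 1 - (π A).toReal := by
    rw [prob_compl_eq_one_sub hA, ENNReal.toReal_sub_of_le h1.le ENNReal.one_ne_top]
    simp
  have ha : 0 < (π A).toReal := ENNReal.toReal_pos h0.ne' (measure_ne_top π A)
  have ha1 : (π A).toReal < 1 := by
    simpa using (ENNReal.toReal_lt_toReal (measure_ne_top π A) ENNReal.one_ne_top).2 h1
  exact div_mul_div_sub_one_le ha (by linarith) (by linarith) ENNReal.toReal_nonneg
    flow_le_measure (h.flow_le_measure_compl hA) ENNReal.toReal_nonneg
    (h.flow_comp_add_two_mul_flow_le hA)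

end ProbabilityTheory.Kernel.Invariant

end Isoperimetry

/-- If `K = 2` then `k₂ = 0` (no reversibility needed). -/
theorem k2_eq_zero_of_Ksup_eq_two {Ω : Type*} [MeasurableSpace Ω] (κ : Kernel Ω Ω)
    [IsMarkovKernel κ] (π : Measure Ω) [IsProbabilityMeasure π]
    (hinv : ∀ B : Set Ω, MeasurableSet B → π B = ∫⁻ x, κ x B ∂π)
    (hK : Ksup κ π = 2) :
    kinfN κ π 2 = 0 := by
  have hκπ := Kernel.invariant_of_forall_measure_eq_lintegral hinv
  set c := kinfN κ π 2
  by_contra hc0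
  have hc : 0 < c := (kinfN_nonneg κ π 2).lt_of_ne' hc0
  -- `c (k - 1) ≤ k (2 - k)` keeps every `k(A)` away from `2`.
  have hbound : ∀ k ∈ (fun A => isoQ κ π A) '' {A | MeasurableSet A ∧ 0 < π A ∧ π A < 1},
      k ≤ max (3 / 2) (2 - c / 4) := by
    rintro _ ⟨A, hA, rfl⟩
    have hc₂ : c ≤ isoQ (κ ∘ₖ κ) π A := kpow_two κ ▸ kinfN_le_isoQ hA
    have hiso := hκπ.isoQ_comp_mul_isoQ_sub_one_le hA.1 hA.2.1 hA.2.2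
    refine le_max_iff.2 (or_iff_not_imp_left.2 fun hk => ?_)
    nlinarith [isoQ_nonneg κ π A]
  have hKle := Real.sSup_le hbound (by positivity)
  have hmax : max (3 / 2) (2 - c / 4) < 2 := max_lt (by norm_num) (by linarith)
  exact (hKle.trans_lt hmax).ne hK
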